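/- Let D = (V, A) be a digraph and f, g : V → ℕ with f ≤ g. There exist k arc-disjoint spanning arborescences F₁,…,F_k with roots r₁,…,r_k satisfying f(v) ≤ #{i : r_i = v} ≤ g(v) for all v ∈ V if and only if: (i) ∑_{v∈V} f(v) ≤ k; (ii) for every subpartition {X₁,…,X_t} of V, ∑_{j=1}^t d_A^-(X_j) ≥ k(t−1) + f̃(V \ ∪_j X_j); and (iii) for every nonempty X ⊆ V, d_A^-(X) ≥ k − g̃(X). -/

import Mathlib

open scoped Classical

/-- The in-degree `d_A^-(X)`: the number of arcs of the multiset `A` with head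
in `X` and tail outside `X`. -/
def dIn {V : Type*} [DecidableEq V] (A : Multiset (V × V)) (X : Finset V) : ℕ :=
  (A.filter (fun a => a.2 ∈ X ∧ a.1 ∉ X)).card

/-- `B` is a spanning `r`-arborescence on the vertex type `V`: every vertex is
reachable from `r`, no arc enters `r`, and every other vertex has exactly one
entering arc. -/
def IsSpanningArborescence {V : Type*} [DecidableEq V]
    (r : V) (B : Multiset (V × V)) : Prop :=
  (∀ v : V, Relation.ReflTransGen (fun a b : V => (a, b) ∈ B) r v) ∧
  (∀ p ∈ B, p.2 ≠ r) ∧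
  (∀ v : V, v ≠ r → (B.filter (fun p => p.2 = v)).card = 1)

/-- `P` is a subpartition of the vertex set: a family of pairwise disjoint
nonempty subsets. -/
def IsSubpartition {V : Type*} [DecidableEq V] (P : Finset (Finset V)) : Prop :=
  (∀ X ∈ P, X.Nonempty) ∧ (P : Set (Finset V)).Pairwise Disjoint

section Basic
variable {V : Type*} [DecidableEq V]

lemma dIn_add (B C : Multiset (V × V)) (X : Finset V) :
    dIn (B + C) X = dIn B X + dIn C X := by
  unfold dIn; rw [Multiset.filter_add, Multiset.card_add]

lemma dIn_mono {B A : Multiset (V × V)} (h : B ≤ A) (X : Finset V) :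
    dIn B X ≤ dIn A X :=
  Multiset.card_le_card (Multiset.filter_le_filter _ h)

lemma dIn_univ [Fintype V] (A : Multiset (V × V)) : dIn A Finset.univ = 0 := by
  unfold dIn
  rw [Multiset.filter_eq_nil.2 (by simp), Multiset.card_zero]

lemma dIn_cons (e : V × V) (A : Multiset (V × V)) (X : Finset V) :
    dIn (e ::ₘ A) X = dIn A X + (if e.2 ∈ X ∧ e.1 ∉ X then 1 else 0) := by
  unfold dIn
  rw [Multiset.filter_cons]
  split <;> simp [add_comm]

lemma dIn_submod (A : Multiset (V × V)) (X Y : Finset V) :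
    dIn A (X ∪ Y) + dIn A (X ∩ Y) ≤ dIn A X + dIn A Y := by
  induction A using Multiset.induction with
  | empty => simp [dIn]
  | cons a s ih =>
    rw [dIn_cons, dIn_cons, dIn_cons, dIn_cons]
    have h : (if a.2 ∈ X ∪ Y ∧ a.1 ∉ X ∪ Y then 1 else 0) +
        (if a.2 ∈ X ∩ Y ∧ a.1 ∉ X ∩ Y then 1 else 0) ≤
        (if a.2 ∈ X ∧ a.1 ∉ X then 1 else 0) + (if a.2 ∈ Y ∧ a.1 ∉ Y then 1 else 0) := by
      by_cases h1 : a.2 ∈ X <;> by_cases h2 : a.2 ∈ Y <;> by_cases h3 : a.1 ∈ X <;>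
        by_cases h4 : a.1 ∈ Y <;>
        simp [Finset.mem_union, Finset.mem_inter, h1, h2, h3, h4]
    omega

lemma card_filter_mono_of_imp {α : Type*} {s : Multiset α} {p q : α → Prop}
    [DecidablePred p] [DecidablePred q] (h : ∀ a ∈ s, p a → q a) :
    (s.filter p).card ≤ (s.filter q).card := by
  induction s using Multiset.induction with
  | empty => simp
  | cons a t ih =>
    rw [Multiset.filter_cons, Multiset.filter_cons, Multiset.card_add, Multiset.card_add]
    have h1 := ih (fun a ha => h a (Multiset.mem_cons_of_mem ha))
    have h2 := h a (Multiset.mem_cons_self a t)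
    split <;> split <;> simp_all <;> omega

def sfin (m : V → ℕ) (X : Finset V) : ℕ := ∑ v ∈ X, m v

lemma sfin_union_inter (m : V → ℕ) (X Y : Finset V) :
    sfin m (X ∪ Y) + sfin m (X ∩ Y) = sfin m X + sfin m Y :=
  Finset.sum_union_inter

lemma sfin_mono (m : V → ℕ) {X Y : Finset V} (h : X ⊆ Y) : sfin m X ≤ sfin m Y :=
  Finset.sum_le_sum_of_subset h

end Basic

section GoodArc
variable {V : Type*} [Fintype V] [DecidableEq V]

lemma good_arc (A : Multiset (V × V)) (k' : ℕ) (m' : V → ℕ) (T : Finset V)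
    (hT : T.Nonempty)
    (h3 : ∀ X : Finset V, X.Nonempty → k' ≤ dIn A X + sfin m' X)
    (h4 : ∀ Y ⊆ T, Y.Nonempty → k' + 1 ≤ dIn A Y + sfin m' Y)
    (h5 : sfin m' Finset.univ = k') :
    ∃ e ∈ A, e.2 ∈ T ∧ e.1 ∉ T ∧
      ∀ X : Finset V, X.Nonempty → e.2 ∈ X → e.1 ∉ X →
        k' + 1 ≤ dIn A X + sfin m' X := by
  set 𝒯 := Finset.univ.powerset.filter
      (fun X : Finset V => dIn A X + sfin m' X = k' ∧ (X ∩ T).Nonempty) with h𝒯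
  by_cases hc : 𝒯.Nonempty
  · obtain ⟨Z, hZmem, hZmin⟩ : ∃ Z ∈ 𝒯, ∀ x ∈ 𝒯, ¬ x < Z := by
      obtain ⟨Z, hZ⟩ := Finset.exists_minimal hc
      exact ⟨Z, hZ.1, fun x hx hlt => hlt.not_ge (hZ.2 hx hlt.le)⟩
    rw [h𝒯, Finset.mem_filter] at hZmem
    obtain ⟨-, hZt, hZT⟩ := hZmem
    -- Claim 2 : there is an arc entering Z∩T with tail in Z
    have hcl2 : ∃ e ∈ A, e.2 ∈ Z ∩ T ∧ e.1 ∉ Z ∩ T ∧ e.1 ∈ Z := by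
      by_contra hno
      push_neg at hno
      have hmono : dIn A (Z ∩ T) ≤ dIn A Z := by
        apply card_filter_mono_of_imp
        rintro a ha ⟨ha2, ha1⟩
        have := hno a ha ha2 ha1
        exact ⟨Finset.mem_of_mem_inter_left ha2, this⟩
      have h4' := h4 (Z ∩ T) Finset.inter_subset_right hZT
      have hmono2 : sfin m' (Z ∩ T) ≤ sfin m' Z := sfin_mono m' Finset.inter_subset_left
      omega
    obtain ⟨e, heA, he2, he1nZT, he1Z⟩ := hcl2
    have he1T : e.1 ∉ T := fun h => he1nZT (Finset.mem_inter.2 ⟨he1Z, h⟩)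
    refine ⟨e, heA, (Finset.mem_inter.1 he2).2, he1T, ?_⟩
    intro X hXne hX2 hX1
    by_contra hlt
    push_neg at hlt
    have hXt : dIn A X + sfin m' X = k' := le_antisymm (by omega) (h3 X hXne)
    -- uncross X and Z
    have hsub := dIn_submod A X Z
    have hmod := sfin_union_inter m' X Z
    have hint : (X ∩ Z).Nonempty :=
      ⟨e.2, Finset.mem_inter.2 ⟨hX2, Finset.mem_of_mem_inter_left he2⟩⟩
    have hu := h3 (X ∪ Z) (hint.mono (Finset.inter_subset_left.trans Finset.subset_union_left))
    have hi := h3 (X ∩ Z) hint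
    have htint : dIn A (X ∩ Z) + sfin m' (X ∩ Z) = k' := by omega
    have hmem : X ∩ Z ∈ 𝒯 := by
      rw [h𝒯, Finset.mem_filter]
      refine ⟨Finset.mem_powerset.2 (Finset.subset_univ _), htint, ?_⟩
      exact ⟨e.2, Finset.mem_inter.2 ⟨Finset.mem_inter.2
        ⟨hX2, Finset.mem_of_mem_inter_left he2⟩, (Finset.mem_inter.1 he2).2⟩⟩
    have hnotlt := hZmin _ hmem
    have hXZsub : X ∩ Z ⊆ Z := Finset.inter_subset_right
    have : X ∩ Z = Z := by
      by_contra hne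
      exact hnotlt (lt_of_le_of_ne hXZsub hne)
    have : Z ⊆ X := this ▸ Finset.inter_subset_left
    exact hX1 (this he1Z)
  · -- no tight set meets T
    have hdT : 1 ≤ dIn A T := by
      have := h4 T (le_refl T) hT
      have : sfin m' T ≤ k' := h5 ▸ sfin_mono m' (Finset.subset_univ T)
      omega
    have : ∃ e ∈ A.filter (fun a => a.2 ∈ T ∧ a.1 ∉ T), True := by
      have hpos : 0 < (A.filter (fun a => a.2 ∈ T ∧ a.1 ∉ T)).card := hdT
      rw [Multiset.card_pos] at hpos
      obtain ⟨e, he⟩ := Multiset.exists_mem_of_ne_zero hpos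
      exact ⟨e, he, trivial⟩
    obtain ⟨e, he, -⟩ := this
    rw [Multiset.mem_filter] at he
    obtain ⟨heA, he2, he1⟩ := he
    refine ⟨e, heA, he2, he1, ?_⟩
    intro X hXne hX2 hX1
    by_contra hlt
    push_neg at hlt
    have hXt : dIn A X + sfin m' X = k' := le_antisymm (by omega) (h3 X hXne)
    exact hc ⟨X, by
      rw [h𝒯, Finset.mem_filter]
      exact ⟨Finset.mem_powerset.2 (Finset.subset_univ _), hXt,
        ⟨e.2, Finset.mem_inter.2 ⟨hX2, he2⟩⟩⟩⟩

end GoodArc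

section Grow
variable {V : Type*} [Fintype V] [DecidableEq V]

lemma grow (k' : ℕ) (m' : V → ℕ) (h5 : sfin m' Finset.univ = k') :
    ∀ (n : ℕ) (A : Multiset (V × V)) (T : Finset V), T.card = n →
    (∀ X : Finset V, X.Nonempty → k' ≤ dIn A X + sfin m' X) →
    (∀ Y ⊆ T, Y.Nonempty → k' + 1 ≤ dIn A Y + sfin m' Y) →
    ∃ F ≤ A, (∀ e ∈ F, e.2 ∈ T) ∧
      (∀ v ∈ T, (F.filter (fun p => p.2 = v)).card = 1) ∧
      (∀ w : V, ∃ s, s ∉ T ∧ Relation.ReflTransGen (fun a b : V => (a, b) ∈ F) s w) ∧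
      (∀ X : Finset V, X.Nonempty → k' ≤ dIn (A - F) X + sfin m' X) := by
  intro n
  induction n with
  | zero =>
    intro A T hTcard h3 _
    have hTe : T = ∅ := Finset.card_eq_zero.1 hTcard
    subst hTe
    refine ⟨0, Multiset.zero_le A, by simp, by simp, ?_, ?_⟩
    · intro w; exact ⟨w, by simp, Relation.ReflTransGen.refl⟩
    · simpa using h3
  | succ n ih =>
    intro A T hTcard h3 h4
    have hT : T.Nonempty := Finset.card_pos.1 (by omega)
    obtain ⟨e, heA, he2, he1, hgood⟩ := good_arc A k' m' T hT h3 h4 h5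
    set A' := A.erase e with hA'
    have hAe : A = e ::ₘ A' := (Multiset.cons_erase heA).symm
    set T' := T.erase e.2 with hT'
    have hT'card : T'.card = n := by
      rw [hT', Finset.card_erase_of_mem he2, hTcard]; omega
    have h3' : ∀ X : Finset V, X.Nonempty → k' ≤ dIn A' X + sfin m' X := by
      intro X hX
      have hc := dIn_cons e A' X
      rw [← hAe] at hc
      by_cases hXe : e.2 ∈ X ∧ e.1 ∉ X
      · have := hgood X hX hXe.1 hXe.2
        rw [if_pos hXe] at hc
        omega
      · rw [if_neg hXe] at hc
        have := h3 X hX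
        omega
    have h4' : ∀ Y ⊆ T', Y.Nonempty → k' + 1 ≤ dIn A' Y + sfin m' Y := by
      intro Y hYsub hY
      have hc := dIn_cons e A' Y
      rw [← hAe] at hc
      have he2Y : e.2 ∉ Y := fun h => (Finset.mem_erase.1 (hYsub h)).1 rfl
      rw [if_neg (fun h => he2Y h.1)] at hc
      have := h4 Y (hYsub.trans (Finset.erase_subset _ _)) hY
      omega
    obtain ⟨F', hF'le, harc, hcard1, hreach, hcond⟩ := ih A' T' hT'card h3' h4'
    refine ⟨e ::ₘ F', ?_, ?_, ?_, ?_, ?_⟩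
    · rw [hAe]; exact Multiset.cons_le_cons e hF'le
    · intro p hp
      rcases Multiset.mem_cons.1 hp with h | h
      · subst h; exact he2
      · exact (Finset.erase_subset _ _) (harc p h)
    · intro v hv
      rw [Multiset.filter_cons]
      by_cases hve : e.2 = v
      · rw [if_pos hve, Multiset.card_add, Multiset.card_singleton]
        have : F'.filter (fun p => p.2 = v) = 0 := by
          rw [Multiset.filter_eq_nil]
          intro p hp hpv
          exact (Finset.mem_erase.1 (harc p hp)).1 (hpv.trans hve.symm)
        rw [this]; rfl
      · rw [if_neg (by simpa using hve), Multiset.card_add]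
        simp only [Multiset.card_zero, zero_add]
        exact hcard1 v (Finset.mem_erase.2 ⟨fun h => hve h.symm, hv⟩)
    · intro w
      obtain ⟨s, hs, hp⟩ := hreach w
      have hmono : Relation.ReflTransGen (fun a b : V => (a, b) ∈ F') s w →
          Relation.ReflTransGen (fun a b : V => (a, b) ∈ e ::ₘ F') s w :=
        fun h => Relation.ReflTransGen.mono (r := fun a b : V => (a, b) ∈ F')
          (p := fun a b : V => (a, b) ∈ e ::ₘ F') (fun a b h => Multiset.mem_cons_of_mem h) s w h
      by_cases hse : s = e.2
      · refine ⟨e.1, he1, ?_⟩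
        refine Relation.ReflTransGen.head ?_ (hse ▸ hmono hp)
        show (e.1, e.2) ∈ e ::ₘ F'
        simp
      · refine ⟨s, ?_, hmono hp⟩
        intro hsT
        exact hs (Finset.mem_erase.2 ⟨hse, hsT⟩)
    · intro X hX
      have : A - (e ::ₘ F') = A' - F' := by
        rw [Multiset.sub_cons, hA']
      rw [this]
      exact hcond X hX

end Grow

section Edmonds
variable {V : Type*} [Fintype V] [DecidableEq V] [Nonempty V]

lemma edmonds_vec :
    ∀ (k : ℕ) (A : Multiset (V × V)) (m : V → ℕ), sfin m Finset.univ = k →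
    (∀ X : Finset V, X.Nonempty → k ≤ dIn A X + sfin m X) →
    ∃ (r : Fin k → V) (B : Fin k → Multiset (V × V)),
      (∑ i, B i) ≤ A ∧ (∀ i, IsSpanningArborescence (r i) (B i)) ∧
      (∀ v : V, (Finset.univ.filter (fun i => r i = v)).card = m v) := by
  intro k
  induction k with
  | zero =>
    intro A m h5 _
    refine ⟨fun i => i.elim0, fun i => i.elim0, by simp, fun i => i.elim0, ?_⟩
    intro v
    have hm : m v = 0 := by
      have := Finset.sum_eq_zero_iff.1 h5 v (Finset.mem_univ v)
      exact this
    simp [hm]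
  | succ k ihk =>
    intro A m h5 h3
    -- find a root with positive multiplicity
    have hr0 : ∃ r₀, 0 < m r₀ := by
      by_contra h
      push_neg at h
      have : sfin m Finset.univ = 0 :=
        Finset.sum_eq_zero (fun v _ => Nat.le_zero.1 (h v))
      omega
    obtain ⟨r₀, hr₀⟩ := hr0
    set m' : V → ℕ := fun v => if v = r₀ then m v - 1 else m v with hm'
    have hm'r₀ : m' r₀ + 1 = m r₀ := by simp [hm']; omega
    have hm'ne : ∀ v, v ≠ r₀ → m' v = m v := by intro v hv; simp [hm', hv]
    have hsfin : ∀ X : Finset V, r₀ ∈ X → sfin m' X + 1 = sfin m X := by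
      intro X hX
      unfold sfin
      have hcong : ∑ v ∈ X.erase r₀, m' v = ∑ v ∈ X.erase r₀, m v :=
        Finset.sum_congr rfl (fun v hv => hm'ne v (Finset.mem_erase.1 hv).1)
      rw [← Finset.add_sum_erase X m' hX, ← Finset.add_sum_erase X m hX, hcong]
      have := hm'r₀
      omega
    have hsfin' : ∀ X : Finset V, r₀ ∉ X → sfin m' X = sfin m X := by
      intro X hX
      exact Finset.sum_congr rfl (fun v hv => hm'ne v (fun h => hX (h ▸ hv)))
    have h5' : sfin m' Finset.univ = k := by
      have := hsfin Finset.univ (Finset.mem_univ r₀)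
      omega
    set T : Finset V := Finset.univ.erase r₀ with hTdef
    have h3g : ∀ X : Finset V, X.Nonempty → k ≤ dIn A X + sfin m' X := by
      intro X hX
      by_cases h : r₀ ∈ X
      · have := h3 X hX; have := hsfin X h; omega
      · have := h3 X hX; have := hsfin' X h; omega
    have h4g : ∀ Y ⊆ T, Y.Nonempty → k + 1 ≤ dIn A Y + sfin m' Y := by
      intro Y hYsub hY
      have hr₀Y : r₀ ∉ Y := fun h => (Finset.mem_erase.1 (hYsub h)).1 rfl
      have := h3 Y hY
      have := hsfin' Y hr₀Y
      omega
    obtain ⟨F, hFle, harc, hcard1, hreach, hcond⟩ :=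
      grow k m' h5' T.card A T rfl h3g h4g
    have harbF : IsSpanningArborescence r₀ F := by
      refine ⟨?_, ?_, ?_⟩
      · intro v
        obtain ⟨s, hs, hp⟩ := hreach v
        have : s = r₀ := by
          by_contra hne
          exact hs (Finset.mem_erase.2 ⟨hne, Finset.mem_univ s⟩)
        exact this ▸ hp
      · intro p hp
        exact (Finset.mem_erase.1 (harc p hp)).1
      · intro v hv
        exact hcard1 v (Finset.mem_erase.2 ⟨hv, Finset.mem_univ v⟩)
    obtain ⟨r, B, hsum, harb, hcnt⟩ := ihk (A - F) m' h5' hcond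
    refine ⟨Fin.cons r₀ r, Fin.cons F B, ?_, ?_, ?_⟩
    · rw [Fin.sum_cons]
      have h1 : F + ∑ i, B i ≤ F + (A - F) := add_le_add (le_refl F) hsum
      rwa [add_tsub_cancel_of_le hFle] at h1
    · intro i
      refine Fin.cases ?_ ?_ i
      · simpa using harbF
      · intro j; simpa using harb j
    · intro v
      rw [Finset.card_filter]
      rw [Fin.sum_univ_succ]
      simp only [Fin.cons_zero, Fin.cons_succ]
      rw [← Finset.card_filter]
      rw [hcnt v]
      by_cases hv : r₀ = v
      · subst hv; rw [if_pos rfl]; omega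
      · rw [if_neg hv, hm'ne v (fun h => hv h.symm)]; omega

end Edmonds

section StepB
variable {V : Type*} [Fintype V] [DecidableEq V]

lemma sfin_update_mem (g : V → ℕ) (v : V) (hv : 1 ≤ g v) {X : Finset V} (hvX : v ∈ X) :
    sfin (fun w => if w = v then g w - 1 else g w) X + 1 = sfin g X := by
  unfold sfin
  have hcong : ∑ w ∈ X.erase v, (if w = v then g w - 1 else g w) = ∑ w ∈ X.erase v, g w :=
    Finset.sum_congr rfl (fun w hw => by rw [if_neg (Finset.mem_erase.1 hw).1])
  rw [← Finset.add_sum_erase X _ hvX, ← Finset.add_sum_erase X g hvX, hcong, if_pos rfl]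
  omega

lemma sfin_update_notmem (g : V → ℕ) (v : V) {X : Finset V} (hvX : v ∉ X) :
    sfin (fun w => if w = v then g w - 1 else g w) X = sfin g X :=
  Finset.sum_congr rfl (fun w hw => if_neg (by rintro rfl; exact hvX hw))

lemma stepB (A : Multiset (V × V)) (k : ℕ) (f : V → ℕ)
    (hii : ∀ P : Finset (Finset V), IsSubpartition P →
      (∑ X ∈ P, (dIn A X : ℤ)) ≥
        (k : ℤ) * ((P.card : ℤ) - 1) + ∑ v ∈ Finset.univ \ P.sup id, (f v : ℤ)) :
    ∀ (n : ℕ) (g : V → ℕ), (∀ v, f v ≤ g v) →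
    (∀ X : Finset V, X.Nonempty → k ≤ dIn A X + sfin g X) →
    sfin g Finset.univ = k + n →
    ∃ m : V → ℕ, (∀ v, f v ≤ m v) ∧ (∀ v, m v ≤ g v) ∧ sfin m Finset.univ = k ∧
      (∀ X : Finset V, X.Nonempty → k ≤ dIn A X + sfin m X) := by
  intro n
  induction n with
  | zero =>
    intro g hfg h3 hsum
    exact ⟨g, hfg, fun v => le_refl _, by omega, h3⟩
  | succ n ih =>
    intro g hfg h3 hsum
    -- find a vertex where g can be lowered
    have hv : ∃ v, f v < g v ∧
        ∀ X : Finset V, X.Nonempty → v ∈ X → dIn A X + sfin g X ≠ k := by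
      by_contra hno
      push_neg at hno
      -- every vertex with f v < g v lies in a tight set
      set Tight : Finset V → Prop :=
        fun X => X.Nonempty ∧ dIn A X + sfin g X = k with hTight
      have huncross : ∀ X Y, Tight X → Tight Y → (X ∩ Y).Nonempty → Tight (X ∪ Y) := by
        rintro X Y ⟨hXne, hXt⟩ ⟨hYne, hYt⟩ hint
        have hsub := dIn_submod A X Y
        have hmod := sfin_union_inter g X Y
        have hu := h3 (X ∪ Y) (hXne.mono Finset.subset_union_left)
        have hi := h3 (X ∩ Y) hint
        exact ⟨hXne.mono Finset.subset_union_left, by omega⟩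
      set MaxT := Finset.univ.powerset.filter
        (fun X : Finset V => Tight X ∧ ∀ Y, Tight Y → X ⊆ Y → Y = X) with hMaxT
      have hext : ∀ X, Tight X → ∃ M ∈ MaxT, X ⊆ M := by
        intro X hX
        obtain ⟨M, hMmem, hMmax⟩ : ∃ M ∈ (Finset.univ.powerset.filter
            (fun Y : Finset V => Tight Y ∧ X ⊆ Y)), ∀ x ∈ (Finset.univ.powerset.filter
            (fun Y : Finset V => Tight Y ∧ X ⊆ Y)), ¬ M < x := by
          obtain ⟨M, hM⟩ := Finset.exists_maximal
            (s := Finset.univ.powerset.filter (fun Y : Finset V => Tight Y ∧ X ⊆ Y))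
            ⟨X, Finset.mem_filter.2 ⟨Finset.mem_powerset.2 (Finset.subset_univ _), hX,
              Finset.Subset.refl X⟩⟩
          exact ⟨M, hM.1, fun x hx hlt => hlt.not_ge (hM.2 hx hlt.le)⟩
        rw [Finset.mem_filter] at hMmem
        obtain ⟨-, hMt, hXM⟩ := hMmem
        refine ⟨M, ?_, hXM⟩
        rw [hMaxT, Finset.mem_filter]
        refine ⟨Finset.mem_powerset.2 (Finset.subset_univ _), hMt, ?_⟩
        intro Y hY hMY
        by_contra hne
        exact hMmax Y (by
          rw [Finset.mem_filter]
          exact ⟨Finset.mem_powerset.2 (Finset.subset_univ _), hY, hXM.trans hMY⟩)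
          (lt_of_le_of_ne hMY (fun h => hne h.symm))
      have hsubp : IsSubpartition MaxT := by
        constructor
        · intro X hX
          rw [hMaxT, Finset.mem_filter] at hX
          exact hX.2.1.1
        · intro X hX Y hY hne
          simp only [hMaxT, Finset.coe_filter, Set.mem_setOf_eq, Finset.mem_coe,
            Finset.mem_powerset] at hX hY
          by_contra hnd
          obtain ⟨v, hvX, hvY⟩ := Finset.not_disjoint_iff.1 hnd
          have hun := huncross X Y hX.2.1 hY.2.1 ⟨v, Finset.mem_inter.2 ⟨hvX, hvY⟩⟩
          have h1 := hX.2.2 (X ∪ Y) hun Finset.subset_union_left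
          have h2 := hY.2.2 (X ∪ Y) hun Finset.subset_union_right
          exact hne (h1.symm.trans h2)
      set U := MaxT.sup id with hU
      have hcov : ∀ v ∈ Finset.univ \ U, f v = g v := by
        intro v hv
        by_contra hne
        have hlt : f v < g v := lt_of_le_of_ne (hfg v) hne
        obtain ⟨X, hXne, hvX, hXt⟩ := hno v hlt
        obtain ⟨M, hMmem, hXM⟩ := hext X ⟨hXne, hXt⟩
        have : v ∈ U := by
          have hMU : id M ≤ U := Finset.le_sup hMmem
          exact hMU (hXM hvX)
        exact (Finset.mem_sdiff.1 hv).2 this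
      -- numeric contradiction
      have hsumN : ∑ X ∈ MaxT, sfin g X = sfin g U := by
        have hd : (↑MaxT : Set (Finset V)).PairwiseDisjoint id := hsubp.2
        have hb := Finset.sum_biUnion (s := MaxT) (t := id) (f := g) hd
        rw [hU, Finset.sup_eq_biUnion]
        unfold sfin
        exact hb.symm
      have hsplit : sfin g U + sfin g (Finset.univ \ U) = k + (n + 1) := by
        unfold sfin
        rw [add_comm, Finset.sum_sdiff (Finset.subset_univ U)]
        exact hsum
      have htight : ∀ X ∈ MaxT, (dIn A X : ℤ) = (k : ℤ) - (sfin g X : ℤ) := by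
        intro X hX
        rw [hMaxT, Finset.mem_filter] at hX
        have := hX.2.1.2
        omega
      have hineq := hii MaxT hsubp
      rw [Finset.sum_congr rfl htight, Finset.sum_sub_distrib, Finset.sum_const,
        nsmul_eq_mul] at hineq
      have hcast1 : ∑ X ∈ MaxT, (sfin g X : ℤ) = ((sfin g U : ℕ) : ℤ) := by
        rw [← hsumN]; push_cast; rfl
      have hcast2 : ∑ v ∈ Finset.univ \ U, (f v : ℤ) = ((sfin g (Finset.univ \ U) : ℕ) : ℤ) := by
        unfold sfin; push_cast
        exact Finset.sum_congr rfl (fun v hv => by rw [hcov v hv])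
      rw [hcast1, ← hU, hcast2] at hineq
      have hexp : (k : ℤ) * ((MaxT.card : ℤ) - 1) = (MaxT.card : ℤ) * k - k := by ring
      rw [hexp] at hineq
      have : (k : ℤ) ≥ ((sfin g U : ℕ) : ℤ) + ((sfin g (Finset.univ \ U) : ℕ) : ℤ) := by
        linarith
      omega
    obtain ⟨v, hvlt, hvgood⟩ := hv
    set g' : V → ℕ := fun w => if w = v then g w - 1 else g w with hg'
    have hgv : 1 ≤ g v := by omega
    have hfg' : ∀ w, f w ≤ g' w := by
      intro w
      by_cases hw : w = v
      · subst hw; simp only [hg', if_pos rfl]; omega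
      · simp only [hg', if_neg hw]; exact hfg w
    have h3' : ∀ X : Finset V, X.Nonempty → k ≤ dIn A X + sfin g' X := by
      intro X hXne
      by_cases hvX : v ∈ X
      · have h1 := hvgood X hXne hvX
        have h2 := h3 X hXne
        have h4 : sfin g' X + 1 = sfin g X := by
          rw [hg']; exact sfin_update_mem g v hgv hvX
        omega
      · have h4 : sfin g' X = sfin g X := by
          rw [hg']; exact sfin_update_notmem g v hvX
        have := h3 X hXne
        omega
    have hsum' : sfin g' Finset.univ = k + n := by
      have h4 : sfin g' Finset.univ + 1 = sfin g Finset.univ := by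
        rw [hg']; exact sfin_update_mem g v hgv (Finset.mem_univ v)
      omega
    obtain ⟨m, hm1, hm2, hm3, hm4⟩ := ih g' hfg' h3' hsum'
    refine ⟨m, hm1, ?_, hm3, hm4⟩
    intro w
    refine (hm2 w).trans ?_
    by_cases hw : w = v
    · subst hw; simp only [hg', if_pos rfl]; omega
    · simp only [hg', if_neg hw]; exact le_refl _

end StepB

section Forward
variable {V : Type*} [Fintype V] [DecidableEq V]

lemma dIn_zero (X : Finset V) : dIn (0 : Multiset (V × V)) X = 0 := by simp [dIn]

lemma dIn_add' (B C : Multiset (V × V)) (X : Finset V) :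
    dIn (B + C) X = dIn B X + dIn C X := by
  unfold dIn; rw [Multiset.filter_add, Multiset.card_add]

lemma dIn_finsum {ι : Type*} (s : Finset ι) (B : ι → Multiset (V × V)) (X : Finset V) :
    dIn (∑ i ∈ s, B i) X = ∑ i ∈ s, dIn (B i) X := by
  induction s using Finset.cons_induction with
  | empty => simp [dIn_zero]
  | cons a s ha ih => rw [Finset.sum_cons, Finset.sum_cons, dIn_add', ih]

lemma arb_enter {r : V} {B : Multiset (V × V)} (harb : IsSpanningArborescence r B)
    {X : Finset V} (hX : X.Nonempty) (hr : r ∉ X) : 1 ≤ dIn B X := by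
  obtain ⟨v, hv⟩ := hX
  have key : ∀ w : V, Relation.ReflTransGen (fun a b : V => (a, b) ∈ B) r w → w ∈ X →
      ∃ p ∈ B, p.2 ∈ X ∧ p.1 ∉ X := by
    intro w h
    induction h with
    | refl => intro hw; exact absurd hw hr
    | @tail b c hrb hbc ih =>
      intro hc
      by_cases hb : b ∈ X
      · exact ih hb
      · exact ⟨(b, c), hbc, hc, hb⟩
  obtain ⟨p, hpB, hp2, hp1⟩ := key v (harb.1 v) hv
  have : p ∈ B.filter (fun a => a.2 ∈ X ∧ a.1 ∉ X) := Multiset.mem_filter.2 ⟨hpB, hp2, hp1⟩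
  exact Multiset.card_pos_iff_exists_mem.2 ⟨p, this⟩

end Forward

/-- **Cai–Frank theorem.**  A digraph `D = (V, A)` contains `k` arc-disjoint
spanning arborescences whose root multiplicities lie between `f` and `g` if and
only if (i) `f̃(V) ≤ k`, (ii) every subpartition `{X₁, …, X_t}` of `V`
satisfies `∑ d_A^-(X_j) ≥ k(t-1) + f̃(V ∖ ∪_j X_j)`, and (iii) every nonempty
`X ⊆ V` satisfies `d_A^-(X) ≥ k − g̃(X)`. -/
theorem cai_frank_arborescence_packing
    {V : Type*} [Fintype V] [DecidableEq V] [Nonempty V]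
    (A : Multiset (V × V)) (hA : ∀ p ∈ A, p.1 ≠ p.2)
    (k : ℕ) (f g : V → ℕ) (hfg : ∀ v : V, f v ≤ g v) :
    (∃ (r : Fin k → V) (B : Fin k → Multiset (V × V)),
        (∑ i, B i) ≤ A ∧
        (∀ i, IsSpanningArborescence (r i) (B i)) ∧
        (∀ v : V, f v ≤ (Finset.univ.filter (fun i => r i = v)).card ∧
          (Finset.univ.filter (fun i => r i = v)).card ≤ g v)) ↔
      ((∑ v : V, f v) ≤ k ∧
       (∀ P : Finset (Finset V), IsSubpartition P →
         (∑ X ∈ P, (dIn A X : ℤ)) ≥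
           (k : ℤ) * ((P.card : ℤ) - 1) + ∑ v ∈ Finset.univ \ P.sup id, (f v : ℤ)) ∧
       (∀ X : Finset V, X.Nonempty →
         (dIn A X : ℤ) ≥ (k : ℤ) - ∑ v ∈ X, (g v : ℤ))) := by
  constructor
  · rintro ⟨r, B, hsum, harb, hcnt⟩
    set c : V → ℕ := fun v => (Finset.univ.filter (fun i => r i = v)).card with hc
    have hktot : ∑ v, c v = k := by
      have h := Finset.card_eq_sum_card_fiberwise
        (f := r) (s := Finset.univ) (t := Finset.univ) (fun x _ => Finset.mem_univ (r x))
      rw [Finset.card_fin] at h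
      exact h.symm
    have hX_count : ∀ X : Finset V,
        (Finset.univ.filter (fun i => r i ∈ X)).card = ∑ v ∈ X, c v := by
      intro X
      rw [Finset.card_eq_sum_card_fiberwise
        (f := r) (s := Finset.univ.filter (fun i => r i ∈ X)) (t := X)
        (fun x hx => (Finset.mem_filter.1 hx).2)]
      apply Finset.sum_congr rfl
      intro v hv
      rw [hc, Finset.filter_filter]
      congr 1
      apply Finset.filter_congr
      intro i _
      exact ⟨And.right, fun h => ⟨h ▸ hv, h⟩⟩
    have hdInA : ∀ X : Finset V, ∑ i, dIn (B i) X ≤ dIn A X := by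
      intro X
      rw [← dIn_finsum]
      exact dIn_mono hsum X
    have hmain : ∀ X : Finset V, X.Nonempty →
        (Finset.univ.filter (fun i => r i ∉ X)).card ≤ ∑ i, dIn (B i) X := by
      intro X hXne
      calc (Finset.univ.filter (fun i => r i ∉ X)).card
          = ∑ i ∈ Finset.univ.filter (fun i => r i ∉ X), 1 := by
            rw [Finset.card_eq_sum_ones]
        _ ≤ ∑ i ∈ Finset.univ.filter (fun i => r i ∉ X), dIn (B i) X :=
            Finset.sum_le_sum (fun i hi =>
              arb_enter (harb i) hXne (Finset.mem_filter.1 hi).2)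
        _ ≤ ∑ i, dIn (B i) X :=
            Finset.sum_le_sum_of_subset (Finset.filter_subset _ _)
    have hsplitk : ∀ X : Finset V,
        (Finset.univ.filter (fun i => r i ∈ X)).card +
          (Finset.univ.filter (fun i => r i ∉ X)).card = k := by
      intro X
      have := Finset.card_filter_add_card_filter_not
        (s := (Finset.univ : Finset (Fin k))) (p := fun i => r i ∈ X)
      rw [Finset.card_fin] at this
      exact this
    refine ⟨?_, ?_, ?_⟩
    · -- (i)
      calc ∑ v : V, f v ≤ ∑ v : V, c v := Finset.sum_le_sum (fun v _ => (hcnt v).1)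
        _ = k := hktot
    · -- (ii)
      intro P hP
      set U := P.sup id with hU
      set SN := ∑ X ∈ P, dIn A X with hSN
      set CU := ∑ v ∈ U, c v with hCU
      -- each root lies in at most one member of P
      have he1 : ∀ i : Fin k, (P.filter (fun X => r i ∈ X)).card =
          if r i ∈ U then 1 else 0 := by
        intro i
        by_cases hiU : r i ∈ U
        · rw [if_pos hiU]
          obtain ⟨X, hXP, hiX⟩ := Finset.mem_sup.1 hiU
          refine le_antisymm ?_ ?_
          · apply Finset.card_le_one.2
            intro Y hY Z hZ
            rw [Finset.mem_filter] at hY hZ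
            by_contra hne
            have hd := hP.2 hY.1 hZ.1 hne
            exact Finset.disjoint_left.1 hd hY.2 hZ.2
          · have : X ∈ P.filter (fun X => r i ∈ X) := Finset.mem_filter.2 ⟨hXP, hiX⟩
            exact Finset.card_pos.2 ⟨X, this⟩
        · rw [if_neg hiU]
          rw [Finset.card_eq_zero, Finset.filter_eq_empty_iff]
          intro X hXP hiX
          exact hiU (Finset.mem_sup.2 ⟨X, hXP, hiX⟩)
      have hsum_e : ∑ i : Fin k, (P.filter (fun X => r i ∈ X)).card = CU := by
        rw [Finset.sum_congr rfl (fun i _ => he1 i), ← Finset.card_filter, hX_count U]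
      have hcnt_e : ∀ i : Fin k, (P.filter (fun X => r i ∉ X)).card +
          (P.filter (fun X => r i ∈ X)).card = P.card := by
        intro i
        have := Finset.card_filter_add_card_filter_not
          (s := P) (p := fun X => r i ∈ X)
        omega
      have hper_i : ∀ i : Fin k, (P.filter (fun X => r i ∉ X)).card ≤
          ∑ X ∈ P, dIn (B i) X := by
        intro i
        calc (P.filter (fun X => r i ∉ X)).card
            = ∑ X ∈ P.filter (fun X => r i ∉ X), 1 := by rw [Finset.card_eq_sum_ones]
          _ ≤ ∑ X ∈ P.filter (fun X => r i ∉ X), dIn (B i) X :=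
              Finset.sum_le_sum (fun X hX => by
                rw [Finset.mem_filter] at hX
                exact arb_enter (harb i) (hP.1 X hX.1) hX.2)
          _ ≤ ∑ X ∈ P, dIn (B i) X :=
              Finset.sum_le_sum_of_subset (Finset.filter_subset _ _)
      have hA1 : k * P.card ≤ SN + CU := by
        have h1 : ∑ i : Fin k, (P.filter (fun X => r i ∉ X)).card ≤ SN := by
          calc ∑ i : Fin k, (P.filter (fun X => r i ∉ X)).card
              ≤ ∑ i : Fin k, ∑ X ∈ P, dIn (B i) X :=
                Finset.sum_le_sum (fun i _ => hper_i i)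
            _ = ∑ X ∈ P, ∑ i : Fin k, dIn (B i) X := Finset.sum_comm
            _ ≤ SN := Finset.sum_le_sum (fun X _ => hdInA X)
        have h2 : ∑ i : Fin k, ((P.filter (fun X => r i ∉ X)).card +
            (P.filter (fun X => r i ∈ X)).card) = k * P.card := by
          rw [Finset.sum_congr rfl (fun i _ => hcnt_e i), Finset.sum_const,
            Finset.card_fin, smul_eq_mul]
        rw [Finset.sum_add_distrib] at h2
        rw [hsum_e] at h2
        omega
      have hA2 : (∑ v ∈ Finset.univ \ U, f v) + CU ≤ k := by
        have h1 : ∑ v ∈ Finset.univ \ U, f v ≤ ∑ v ∈ Finset.univ \ U, c v :=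
          Finset.sum_le_sum (fun v _ => (hcnt v).1)
        have h2 : (∑ v ∈ Finset.univ \ U, c v) + CU = k := by
          rw [hCU, Finset.sum_sdiff (Finset.subset_univ U)]
          exact hktot
        omega
      have hz0 : (∑ X ∈ P, (dIn A X : ℤ)) = (SN : ℤ) := by rw [hSN]; push_cast; rfl
      have hz0' : (∑ v ∈ Finset.univ \ U, (f v : ℤ)) =
          ((∑ v ∈ Finset.univ \ U, f v : ℕ) : ℤ) := by push_cast; rfl
      rw [hz0, hz0']
      have hz1 : (k : ℤ) * (P.card : ℤ) ≤ (SN : ℤ) + (CU : ℤ) := by exact_mod_cast hA1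
      have hz2 : ((∑ v ∈ Finset.univ \ U, f v : ℕ) : ℤ) + (CU : ℤ) ≤ (k : ℤ) := by
        exact_mod_cast hA2
      have hexp : (k : ℤ) * ((P.card : ℤ) - 1) = (k : ℤ) * (P.card : ℤ) - k := by ring
      rw [hexp]
      linarith
    · -- (iii)
      intro X hXne
      have h1 := hmain X hXne
      have h2 := hdInA X
      have h3 := hsplitk X
      have h4 : (Finset.univ.filter (fun i => r i ∈ X)).card ≤ ∑ v ∈ X, g v := by
        rw [hX_count X]
        exact Finset.sum_le_sum (fun v _ => (hcnt v).2)
      have hN : k ≤ dIn A X + ∑ v ∈ X, g v := by omega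
      have hcast : (∑ v ∈ X, (g v : ℤ)) = ((∑ v ∈ X, g v : ℕ) : ℤ) := by push_cast; rfl
      rw [hcast]
      omega
  · rintro ⟨hi, hii, hiii⟩
    -- convert (iii) to ℕ form
    have h3g : ∀ X : Finset V, X.Nonempty → k ≤ dIn A X + sfin g X := by
      intro X hX
      have h := hiii X hX
      have hcast : (∑ v ∈ X, (g v : ℤ)) = ((sfin g X : ℕ) : ℤ) := by
        unfold sfin; push_cast; rfl
      rw [hcast] at h
      omega
    have hgk : k ≤ sfin g Finset.univ := by
      have := h3g Finset.univ Finset.univ_nonempty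
      rw [dIn_univ] at this
      omega
    obtain ⟨m, hm1, hm2, hm3, hm4⟩ := stepB A k f hii (sfin g Finset.univ - k) g hfg h3g
      (by omega)
    obtain ⟨r, B, hsum, harb, hcnt⟩ := edmonds_vec k A m hm3 hm4
    exact ⟨r, B, hsum, harb, fun v => ⟨(hcnt v) ▸ hm1 v, (hcnt v) ▸ hm2 v⟩⟩
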